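/- Let F be a p-adic field of odd residual characteristic, ψ a normalized nontrivial additive character, and χ a character of F* with odd conductor m ≥ 3. Then there exists a unique b ∈ O/P such that for all x ∈ 1+P^{(m-1)/2}: χ(x) = ψ(2⁻¹ c ϖ^{-m}((x-1)² - 2(x-1))) · ψ(c·b·ϖ^{-(m+1)/2}(x-1)), where c = c_{χ,ψ}. -/

import Mathlib

/-!
Write `m = 2k + 1` and absorb `c` into `ψ`. The hypothesis on `c` says `χ(1 + y) = ψ(y ϖ^{-m})⁻¹`
for `y ∈ P^{k+1}`. On the larger group `1 + P^k` this fails to be multiplicative only to second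
order: from `(1 + u)(1 + v) = (1 + u + v)(1 + uv/(1 + u + v))` one gets
`χ(1 + u) χ(1 + v) ψ(uv ϖ^{-m}) = χ(1 + u + v)`, so the twist by the truncated logarithm,
`η(w) = χ(1 + w) ψ((w - w²/2) ϖ^{-m})`, is additive on `P^k` and trivial on `P^{k+1}`.
Hence `a ↦ η(a ϖ^k)` is a character of the finite residue ring `O/P`. As `a ↦ ψ(a ϖ^{-1})` is a
primitive character of `O/P`, every character of `O/P` is `a ↦ ψ(b a ϖ^{-1})` for some `b`,
unique modulo `P`; this `b` is the linear coefficient.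
-/

namespace AddChar

lemma map_eq_of_map_sub_eq_one {A M : Type*} [AddGroup A] [Monoid M] (ψ : AddChar A M) {x y : A}
    (h : ψ (x - y) = 1) : ψ x = ψ y := by
  rw [← sub_add_cancel x y, map_add_eq_mul, h, one_mul]

variable {R M : Type*} [CommRing R] [CommMonoid M]

def liftQuotient (I : Ideal R) (ψ : AddChar R M) (h : ∀ a ∈ I, ψ a = 1) :
    AddChar (R ⧸ I) M where
  toFun := Quotient.lift ψ fun _ _ hab ↦ ψ.map_eq_of_map_sub_eq_one <| h _ <|
    (Submodule.quotientRel_def _).mp hab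
  map_zero_eq_one' := ψ.map_zero_eq_one
  map_add_eq_mul' := by
    rintro ⟨a⟩ ⟨b⟩
    exact ψ.map_add_eq_mul a b

@[simp]
lemma liftQuotient_mk (I : Ideal R) (ψ : AddChar R M) (h : ∀ a ∈ I, ψ a = 1) (a : R) :
    liftQuotient I ψ h (Ideal.Quotient.mk I a) = ψ a := rfl

lemma exists_mulShift_eq_of_isPrimitive [Finite R] {ψ : AddChar R ℂ} (hψ : ψ.IsPrimitive)
    (φ : AddChar R ℂ) : ∃ r, ψ.mulShift r = φ := by
  cases nonempty_fintype R
  exact ((Fintype.bijective_iff_injective_and_card _).mpr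
    ⟨to_mulShift_inj_of_isPrimitive hψ, card_eq.symm⟩).2 φ

end AddChar

section Uniformizer

variable {F : Type*} [Field F] {O : Subring F} {ϖ : F}

lemma mul_inv_pow_mem_of_le (hϖO : ϖ ∈ O) (hϖ0 : ϖ ≠ 0) {u : F} {j n : ℕ} (hjn : j ≤ n)
    (hu : u * (ϖ ^ n)⁻¹ ∈ O) : u * (ϖ ^ j)⁻¹ ∈ O := by
  obtain ⟨d, rfl⟩ := Nat.exists_eq_add_of_le hjn
  have h : u * (ϖ ^ j)⁻¹ = u * (ϖ ^ (j + d))⁻¹ * ϖ ^ d := by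
    rw [pow_add]; field_simp
  exact h ▸ O.mul_mem hu (O.pow_mem hϖO d)

lemma mul_mul_inv_pow_add_mem {u v : F} {j l : ℕ} (hu : u * (ϖ ^ j)⁻¹ ∈ O)
    (hv : v * (ϖ ^ l)⁻¹ ∈ O) : u * v * (ϖ ^ (j + l))⁻¹ ∈ O := by
  have h : u * v * (ϖ ^ (j + l))⁻¹ = u * (ϖ ^ j)⁻¹ * (v * (ϖ ^ l)⁻¹) := by
    rw [pow_add, mul_inv]; ring
  exact h ▸ O.mul_mem hu hv

lemma mem_of_mul_inv_pow_mem (hϖO : ϖ ∈ O) (hϖ0 : ϖ ≠ 0) {u : F} {n : ℕ}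
    (hu : u * (ϖ ^ n)⁻¹ ∈ O) : u ∈ O := by
  simpa using mul_inv_pow_mem_of_le hϖO hϖ0 (Nat.zero_le n) hu

lemma one_add_mul_inv_notMem (hϖnu : ϖ⁻¹ ∉ O) {u : F} (hu : u * ϖ⁻¹ ∈ O) :
    (1 + u) * ϖ⁻¹ ∉ O := fun h ↦ hϖnu (by simpa [add_mul] using O.sub_mem h hu)

lemma inv_mem_of_mul_inv_notMem (hϖgen : ∀ x : F, x ∈ O → x⁻¹ ∉ O → x * ϖ⁻¹ ∈ O) {x : F}
    (hx : x ∈ O) (h : x * ϖ⁻¹ ∉ O) : x⁻¹ ∈ O :=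
  not_not.mp (mt (hϖgen x hx) h)

lemma mem_span_uniformizer_iff (hϖO : ϖ ∈ O) (hϖ0 : ϖ ≠ 0) (a : O) :
    a ∈ Ideal.span {(⟨ϖ, hϖO⟩ : O)} ↔ (a : F) * ϖ⁻¹ ∈ O := by
  rw [Ideal.mem_span_singleton']
  constructor
  · rintro ⟨b, rfl⟩
    simp [hϖ0]
  · intro h
    exact ⟨⟨_, h⟩, Subtype.ext (by simp [hϖ0])⟩

lemma mul_inv_mem_of_forall_map_eq_one (hϖ0 : ϖ ≠ 0)
    (hϖgen : ∀ x : F, x ∈ O → x⁻¹ ∉ O → x * ϖ⁻¹ ∈ O) {ψ : AddChar F ℂ}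
    (hψnt : ∃ x : F, ϖ * x ∈ O ∧ ψ x ≠ 1) {d : F} (hd : d ∈ O)
    (h : ∀ a ∈ O, ψ (d * a * ϖ⁻¹) = 1) : d * ϖ⁻¹ ∈ O := by
  by_contra hd'
  have hd0 : d ≠ 0 := by rintro rfl; simp at hd'
  obtain ⟨x, hxO, hx⟩ := hψnt
  have := h (d⁻¹ * (ϖ * x)) (O.mul_mem (inv_mem_of_mul_inv_notMem hϖgen hd hd') hxO)
  exact hx (by rwa [show d * (d⁻¹ * (ϖ * x)) * ϖ⁻¹ = x by field_simp] at this)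

end Uniformizer

section ResidueField

variable {F : Type*} [Field F] {O : Subring F} {ϖ : F} {ψ : AddChar F ℂ}

lemma exists_mem_forall_eq_map_mul_inv (hϖO : ϖ ∈ O) (hϖ0 : ϖ ≠ 0)
    (hϖgen : ∀ x : F, x ∈ O → x⁻¹ ∉ O → x * ϖ⁻¹ ∈ O)
    (hfin : Finite (O ⧸ Ideal.span {(⟨ϖ, hϖO⟩ : O)}))
    (hψO : ∀ x : F, x ∈ O → ψ x = 1) (hψnt : ∃ x : F, ϖ * x ∈ O ∧ ψ x ≠ 1)
    (E : AddChar O ℂ) (hE : ∀ a : O, (a : F) * ϖ⁻¹ ∈ O → E a = 1) :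
    ∃ b ∈ O, ∀ a : O, E a = ψ (b * a * ϖ⁻¹) := by
  set I := Ideal.span {(⟨ϖ, hϖO⟩ : O)}
  have := hfin
  have hI := mem_span_uniformizer_iff hϖO hϖ0
  let ψ₀ : AddChar O ℂ := (ψ.mulShift ϖ⁻¹).compAddMonoidHom O.subtype.toAddMonoidHom
  have hψ₀ : ∀ a : O, ψ₀ a = ψ (a * ϖ⁻¹) := fun a ↦ by simp [ψ₀, mul_comm]
  let ψI := AddChar.liftQuotient I ψ₀ fun a ha ↦ (hψ₀ a).trans (hψO _ ((hI a).1 ha))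
  have hprim : ψI.IsPrimitive := by
    intro r hr hr1
    obtain ⟨a, rfl⟩ := Ideal.Quotient.mk_surjective r
    refine hr (Ideal.Quotient.eq_zero_iff_mem.2 ((hI a).2 ?_))
    refine mul_inv_mem_of_forall_map_eq_one hϖ0 hϖgen hψnt a.2 fun x hx ↦ ?_
    simpa [ψI, ← map_mul, hψ₀] using DFunLike.congr_fun hr1 (Ideal.Quotient.mk I ⟨x, hx⟩)
  obtain ⟨r, hr⟩ := ψI.exists_mulShift_eq_of_isPrimitive hprim
    (AddChar.liftQuotient I E fun a ha ↦ hE a ((hI a).1 ha))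
  obtain ⟨b, rfl⟩ := Ideal.Quotient.mk_surjective r
  refine ⟨b, b.2, fun a ↦ ?_⟩
  simpa [ψI, ← map_mul, hψ₀] using (DFunLike.congr_fun hr (Ideal.Quotient.mk I a)).symm

end ResidueField

section Twist

variable {F : Type*} [Field F] {O : Subring F} {ϖ : F} {ψ : AddChar F ℂ} {χ : F →* ℂ}
  {m n : ℕ}

def quadraticTwist (ψ : AddChar F ℂ) (χ : F →* ℂ) (ϖ : F) (m : ℕ) (w : F) : ℂ :=
  χ (1 + w) * ψ ((w - 2⁻¹ * w ^ 2) * (ϖ ^ m)⁻¹)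

lemma map_mul_map_eq_one
    (hc : ∀ x : F, (x - 1) * (ϖ ^ n)⁻¹ ∈ O → ψ ((x - 1) * (ϖ ^ m)⁻¹) = (χ x)⁻¹)
    {x : F} (hx : (x - 1) * (ϖ ^ n)⁻¹ ∈ O) : χ x * ψ ((x - 1) * (ϖ ^ m)⁻¹) = 1 := by
  have hχx : χ x ≠ 0 := fun h ↦ (ψ.val_isUnit _).ne_zero (by rw [hc x hx, h, inv_zero])
  rw [hc x hx, mul_inv_cancel₀ hχx]

lemma quadraticTwist_eq_one (hϖO : ϖ ∈ O) (hϖ0 : ϖ ≠ 0) (h2O : (2 : F)⁻¹ ∈ O)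
    (hψO : ∀ x : F, x ∈ O → ψ x = 1)
    (hc : ∀ x : F, (x - 1) * (ϖ ^ n)⁻¹ ∈ O → ψ ((x - 1) * (ϖ ^ m)⁻¹) = (χ x)⁻¹)
    (hmn : m ≤ n + n) {u : F} (hu : u * (ϖ ^ n)⁻¹ ∈ O) : quadraticTwist ψ χ ϖ m u = 1 := by
  have hsq : u * u * (ϖ ^ m)⁻¹ ∈ O :=
    mul_inv_pow_mem_of_le hϖO hϖ0 hmn (mul_mul_inv_pow_add_mem hu hu)
  have hlin := map_mul_map_eq_one hc (x := 1 + u) (by rwa [add_sub_cancel_left])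
  rw [add_sub_cancel_left] at hlin
  rw [quadraticTwist,
    show (u - 2⁻¹ * u ^ 2) * (ϖ ^ m)⁻¹ = u * (ϖ ^ m)⁻¹ + -(2⁻¹ * (u * u * (ϖ ^ m)⁻¹)) by ring,
    ψ.map_add_eq_mul, hψO _ (O.neg_mem (O.mul_mem h2O hsq)), mul_one, hlin]

lemma map_one_add_mul_map_one_add (hϖO : ϖ ∈ O) (hϖ0 : ϖ ≠ 0) (hϖnu : ϖ⁻¹ ∉ O)
    (hϖgen : ∀ x : F, x ∈ O → x⁻¹ ∉ O → x * ϖ⁻¹ ∈ O) (hψO : ∀ x : F, x ∈ O → ψ x = 1)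
    (hc : ∀ x : F, (x - 1) * (ϖ ^ n)⁻¹ ∈ O → ψ ((x - 1) * (ϖ ^ m)⁻¹) = (χ x)⁻¹)
    {j : ℕ} (hj : 1 ≤ j) (hnj : n ≤ j + j) (hmj : m ≤ j + j + j) {u v : F}
    (hu : u * (ϖ ^ j)⁻¹ ∈ O) (hv : v * (ϖ ^ j)⁻¹ ∈ O) :
    χ (1 + u) * χ (1 + v) * ψ (u * v * (ϖ ^ m)⁻¹) = χ (1 + (u + v)) := by
  have huv : (u + v) * (ϖ ^ j)⁻¹ ∈ O := by rw [add_mul]; exact O.add_mem hu hv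
  have hs := one_add_mul_inv_notMem hϖnu (u := u + v)
    (by simpa using mul_inv_pow_mem_of_le hϖO hϖ0 hj huv)
  have hs0 : 1 + (u + v) ≠ 0 := fun h ↦ hs (by simp [h])
  have hsO : (1 + (u + v))⁻¹ ∈ O := inv_mem_of_mul_inv_notMem hϖgen
    (O.add_mem O.one_mem (mem_of_mul_inv_pow_mem hϖO hϖ0 huv)) hs
  set t := u * v * (1 + (u + v))⁻¹ with ht_def
  have hfactor : (1 + u) * (1 + v) = (1 + (u + v)) * (1 + t) := by
    rw [ht_def]; field_simp; ring
  have huv2 := mul_mul_inv_pow_add_mem hu hv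
  have ht : (1 + t - 1) * (ϖ ^ n)⁻¹ ∈ O := by
    rw [add_sub_cancel_left, show t * (ϖ ^ n)⁻¹ = (1 + (u + v))⁻¹ * (u * v * (ϖ ^ n)⁻¹) by
      rw [ht_def]; ring]
    exact O.mul_mem hsO (mul_inv_pow_mem_of_le hϖO hϖ0 hnj huv2)
  have hχt := map_mul_map_eq_one hc ht
  rw [add_sub_cancel_left] at hχt
  have hψt : ψ (t * (ϖ ^ m)⁻¹) = ψ (u * v * (ϖ ^ m)⁻¹) := by
    have hcube := mul_inv_pow_mem_of_le hϖO hϖ0 hmj (mul_mul_inv_pow_add_mem huv2 huv)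
    refine ψ.map_eq_of_map_sub_eq_one (hψO _ ?_)
    rw [show t * (ϖ ^ m)⁻¹ - u * v * (ϖ ^ m)⁻¹ =
        -((1 + (u + v))⁻¹ * (u * v * (u + v) * (ϖ ^ m)⁻¹)) by rw [ht_def]; field_simp; ring]
    exact O.neg_mem (O.mul_mem hsO hcube)
  rw [← map_mul, hfactor, map_mul, mul_assoc, ← hψt, hχt, mul_one]

lemma quadraticTwist_add (hϖO : ϖ ∈ O) (hϖ0 : ϖ ≠ 0) (hϖnu : ϖ⁻¹ ∉ O)
    (hϖgen : ∀ x : F, x ∈ O → x⁻¹ ∉ O → x * ϖ⁻¹ ∈ O) (h2 : (2 : F) ≠ 0)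
    (hψO : ∀ x : F, x ∈ O → ψ x = 1)
    (hc : ∀ x : F, (x - 1) * (ϖ ^ n)⁻¹ ∈ O → ψ ((x - 1) * (ϖ ^ m)⁻¹) = (χ x)⁻¹)
    {j : ℕ} (hj : 1 ≤ j) (hnj : n ≤ j + j) (hmj : m ≤ j + j + j) {u v : F}
    (hu : u * (ϖ ^ j)⁻¹ ∈ O) (hv : v * (ϖ ^ j)⁻¹ ∈ O) :
    quadraticTwist ψ χ ϖ m (u + v) = quadraticTwist ψ χ ϖ m u * quadraticTwist ψ χ ϖ m v := by
  have hquad : ψ (u * v * (ϖ ^ m)⁻¹) * ψ ((u + v - 2⁻¹ * (u + v) ^ 2) * (ϖ ^ m)⁻¹) =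
      ψ ((u - 2⁻¹ * u ^ 2) * (ϖ ^ m)⁻¹) * ψ ((v - 2⁻¹ * v ^ 2) * (ϖ ^ m)⁻¹) := by
    rw [← ψ.map_add_eq_mul, ← ψ.map_add_eq_mul]
    congr 1
    field_simp
    ring
  rw [quadraticTwist, quadraticTwist, quadraticTwist,
    ← map_one_add_mul_map_one_add hϖO hϖ0 hϖnu hϖgen hψO hc hj hnj hmj hu hv, mul_assoc, hquad]
  ring

lemma exists_quadraticTwist_eq_map_mul (hϖO : ϖ ∈ O) (hϖ0 : ϖ ≠ 0) (hϖnu : ϖ⁻¹ ∉ O)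
    (hϖgen : ∀ x : F, x ∈ O → x⁻¹ ∉ O → x * ϖ⁻¹ ∈ O)
    (hfin : Finite (O ⧸ Ideal.span {(⟨ϖ, hϖO⟩ : O)})) (h2 : (2 : F) ≠ 0) (h2O : (2 : F)⁻¹ ∈ O)
    (hψO : ∀ x : F, x ∈ O → ψ x = 1) (hψnt : ∃ x : F, ϖ * x ∈ O ∧ ψ x ≠ 1) {k : ℕ} (hk : 1 ≤ k)
    (hc : ∀ x : F, (x - 1) * (ϖ ^ (k + 1))⁻¹ ∈ O →
      ψ ((x - 1) * (ϖ ^ (2 * k + 1))⁻¹) = (χ x)⁻¹) :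
    ∃ b ∈ O, ∀ w : F, w * (ϖ ^ k)⁻¹ ∈ O →
      quadraticTwist ψ χ ϖ (2 * k + 1) w = ψ (b * w * (ϖ ^ (k + 1))⁻¹) := by
  have hmem : ∀ a : O, (a : F) * ϖ ^ k * (ϖ ^ k)⁻¹ ∈ O := fun a ↦ by simp [hϖ0]
  let E : AddChar O ℂ :=
    { toFun := fun a ↦ quadraticTwist ψ χ ϖ (2 * k + 1) (a * ϖ ^ k)
      map_zero_eq_one' := by simp [quadraticTwist]
      map_add_eq_mul' := fun a b ↦ by
        simpa only [Subring.coe_add, add_mul] using quadraticTwist_add hϖO hϖ0 hϖnu hϖgen h2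
          hψO hc hk (by omega) (by omega) (hmem a) (hmem b) }
  obtain ⟨b, hb, hE⟩ := exists_mem_forall_eq_map_mul_inv hϖO hϖ0 hϖgen hfin hψO hψnt E
    fun a ha ↦ quadraticTwist_eq_one hϖO hϖ0 h2O hψO hc (by omega) <| by
      rwa [pow_succ, mul_inv, ← mul_assoc, mul_assoc (a : F), mul_inv_cancel₀ (pow_ne_zero _ hϖ0),
        mul_one]
  refine ⟨b, hb, fun w hw ↦ ?_⟩
  convert hE ⟨w * (ϖ ^ k)⁻¹, hw⟩ using 2
  · simp [E, hϖ0]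
  · rw [pow_succ, mul_inv]; ring

lemma map_eq_map_mul_quadraticTwist (h2 : (2 : F) ≠ 0) (m : ℕ) (x : F) :
    χ x = ψ (2⁻¹ * ((x - 1) ^ 2 - 2 * (x - 1)) * (ϖ ^ m)⁻¹) *
      quadraticTwist ψ χ ϖ m (x - 1) := by
  rw [quadraticTwist, add_sub_cancel, mul_left_comm, ← ψ.map_add_eq_mul,
    show 2⁻¹ * ((x - 1) ^ 2 - 2 * (x - 1)) * (ϖ ^ m)⁻¹ + (x - 1 - 2⁻¹ * (x - 1) ^ 2) * (ϖ ^ m)⁻¹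
      = 0 by field_simp; ring, ψ.map_zero_eq_one, mul_one]

theorem exists_map_eq_quadratic_mul_linear (hϖO : ϖ ∈ O) (hϖ0 : ϖ ≠ 0) (hϖnu : ϖ⁻¹ ∉ O)
    (hϖgen : ∀ x : F, x ∈ O → x⁻¹ ∉ O → x * ϖ⁻¹ ∈ O)
    (hfin : Finite (O ⧸ Ideal.span {(⟨ϖ, hϖO⟩ : O)})) (h2 : (2 : F) ≠ 0) (h2O : (2 : F)⁻¹ ∈ O)
    (hψO : ∀ x : F, x ∈ O → ψ x = 1) (hψnt : ∃ x : F, ϖ * x ∈ O ∧ ψ x ≠ 1) {k : ℕ} (hk : 1 ≤ k)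
    (hc : ∀ x : F, (x - 1) * (ϖ ^ (k + 1))⁻¹ ∈ O →
      ψ ((x - 1) * (ϖ ^ (2 * k + 1))⁻¹) = (χ x)⁻¹) :
    ∃ b ∈ O,
      (∀ x : F, (x - 1) * (ϖ ^ k)⁻¹ ∈ O →
        χ x = ψ (2⁻¹ * ((x - 1) ^ 2 - 2 * (x - 1)) * (ϖ ^ (2 * k + 1))⁻¹) *
          ψ (b * (x - 1) * (ϖ ^ (k + 1))⁻¹)) ∧
      ∀ b' ∈ O, (∀ x : F, (x - 1) * (ϖ ^ k)⁻¹ ∈ O →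
        χ x = ψ (2⁻¹ * ((x - 1) ^ 2 - 2 * (x - 1)) * (ϖ ^ (2 * k + 1))⁻¹) *
          ψ (b' * (x - 1) * (ϖ ^ (k + 1))⁻¹)) → (b - b') * ϖ⁻¹ ∈ O := by
  obtain ⟨b, hb, hlin⟩ :=
    exists_quadraticTwist_eq_map_mul hϖO hϖ0 hϖnu hϖgen hfin h2 h2O hψO hψnt hk hc
  refine ⟨b, hb, fun x hx ↦ by rw [map_eq_map_mul_quadraticTwist h2, hlin _ hx],
    fun b' hb' hb'χ ↦ ?_⟩
  refine mul_inv_mem_of_forall_map_eq_one hϖ0 hϖgen hψnt (O.sub_mem hb hb') fun a ha ↦ ?_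
  set x := 1 + a * ϖ ^ k with hx_def
  have hx : (x - 1) * (ϖ ^ k)⁻¹ ∈ O := by simpa [hx_def, hϖ0] using ha
  have hψbb' : ψ (b * (x - 1) * (ϖ ^ (k + 1))⁻¹) = ψ (b' * (x - 1) * (ϖ ^ (k + 1))⁻¹) := by
    have h := (map_eq_map_mul_quadraticTwist (ψ := ψ) (ϖ := ϖ) h2 (2 * k + 1) x).symm.trans
      (hb'χ x hx)
    rwa [hlin (x - 1) hx, mul_right_inj' (ψ.val_isUnit _).ne_zero] at h
  rw [show (b - b') * a * ϖ⁻¹ = b * (x - 1) * (ϖ ^ (k + 1))⁻¹ - b' * (x - 1) * (ϖ ^ (k + 1))⁻¹ by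
      rw [hx_def, pow_succ]; field_simp; ring,
    ψ.map_sub_eq_div, hψbb', div_self (ψ.val_isUnit _).ne_zero]

end Twist

theorem stmt_16_general {p : ℕ} [Fact p.Prime] {F : Type*} [Field F]
    [Algebra ℚ_[p] F]
    (O : Subring F) (ϖ : F)
    (hϖO : ϖ ∈ O) (hϖ0 : ϖ ≠ 0) (hϖnu : ϖ⁻¹ ∉ O)
    (hϖgen : ∀ x : F, x ∈ O → x⁻¹ ∉ O → x * ϖ⁻¹ ∈ O)
    (hfin : Finite (O ⧸ Ideal.span {(⟨ϖ, hϖO⟩ : O)}))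
    (h2 : (2 : F)⁻¹ ∈ O)
    (ψ : AddChar F ℂ)
    (hψO : ∀ x : F, x ∈ O → ψ x = 1)
    (hψnt : ∃ x : F, ϖ * x ∈ O ∧ ψ x ≠ 1)
    (m : ℕ) (hm : Odd m) (hm3 : 3 ≤ m)
    (χ : F →* ℂ)
    (hχ' : ∃ x : F, (x - 1) * (ϖ ^ (m - 1))⁻¹ ∈ O ∧ χ x ≠ 1)
    (c : F) (hcO : c ∈ O) (hcu : c⁻¹ ∈ O)
    (hc : ∀ x : F, (x - 1) * (ϖ ^ ((m + 1) / 2))⁻¹ ∈ O →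
      ψ (c * (x - 1) * (ϖ ^ m)⁻¹) = (χ x)⁻¹) :
    ∃ b : F, b ∈ O ∧
      (∀ x : F, (x - 1) * (ϖ ^ ((m - 1) / 2))⁻¹ ∈ O →
        χ x = ψ ((2 : F)⁻¹ * c * ((x - 1) ^ 2 - 2 * (x - 1)) * (ϖ ^ m)⁻¹) *
          ψ (c * b * (x - 1) * (ϖ ^ ((m + 1) / 2))⁻¹)) ∧
      (∀ b' : F, b' ∈ O →
        (∀ x : F, (x - 1) * (ϖ ^ ((m - 1) / 2))⁻¹ ∈ O →
          χ x = ψ ((2 : F)⁻¹ * c * ((x - 1) ^ 2 - 2 * (x - 1)) * (ϖ ^ m)⁻¹) *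
            ψ (c * b' * (x - 1) * (ϖ ^ ((m + 1) / 2))⁻¹)) →
        (b - b') * ϖ⁻¹ ∈ O) := by
  have : CharZero F := charZero_of_injective_algebraMap (algebraMap ℚ_[p] F).injective
  obtain ⟨k, rfl⟩ := hm
  rw [show (2 * k + 1 - 1) / 2 = k by omega]
  rw [show (2 * k + 1 + 1) / 2 = k + 1 by omega] at hc ⊢
  rw [show 2 * k + 1 - 1 = 2 * k by omega] at hχ'
  have hc0 : c ≠ 0 := by
    rintro rfl
    obtain ⟨x, hx, hχx⟩ := hχ'
    have := hc x (mul_inv_pow_mem_of_le hϖO hϖ0 (by omega) hx)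
    exact hχx (by simpa [eq_comm] using this)
  have hψcO : ∀ x ∈ O, ψ.mulShift c x = 1 := fun x hx ↦ hψO _ (O.mul_mem hcO hx)
  have hψcnt : ∃ x, ϖ * x ∈ O ∧ ψ.mulShift c x ≠ 1 := by
    obtain ⟨x, hxO, hx⟩ := hψnt
    exact ⟨c⁻¹ * x, by simpa [mul_left_comm] using O.mul_mem hcu hxO, by simpa [hc0] using hx⟩
  simpa only [AddChar.mulShift_apply, ← mul_assoc, mul_comm c (2⁻¹ : F)] using
    exists_map_eq_quadratic_mul_linear hϖO hϖ0 hϖnu hϖgen hfin two_ne_zero h2 hψcO hψcnt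
      (by omega) (by simpa only [AddChar.mulShift_apply, ← mul_assoc] using hc)

/-- Let `F` be a p-adic field of odd residual characteristic, `ψ` a normalized
nontrivial additive character, and `χ` a character of `Fˣ` with odd conductor
`m ≥ 3`, `c = c_{χ,ψ}`. Then there exists `b ∈ O`, unique modulo `P`, such that for
all `x ∈ 1 + P^{(m-1)/2}`:
`χ(x) = ψ(2⁻¹cϖ^{-m}((x-1)² - 2(x-1))) · ψ(c·b·ϖ^{-(m+1)/2}(x-1))`. -/
theorem stmt_16 {p : ℕ} [Fact p.Prime] (hp : p ≠ 2) {F : Type*} [Field F]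
    [Algebra ℚ_[p] F] [FiniteDimensional ℚ_[p] F]
    (O : Subring F) (ϖ : F)
    (hϖO : ϖ ∈ O) (hϖ0 : ϖ ≠ 0) (hϖnu : ϖ⁻¹ ∉ O)
    (hϖgen : ∀ x : F, x ∈ O → x⁻¹ ∉ O → x * ϖ⁻¹ ∈ O)
    (hval : ∀ x : F, x ≠ 0 → ∃ n : ℤ, x * (ϖ ^ n)⁻¹ ∈ O ∧ (x * (ϖ ^ n)⁻¹)⁻¹ ∈ O)
    (hfin : Finite (O ⧸ Ideal.span {(⟨ϖ, hϖO⟩ : O)}))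
    (h2 : (2 : F)⁻¹ ∈ O)
    (ψ : AddChar F ℂ)
    (hψO : ∀ x : F, x ∈ O → ψ x = 1)
    (hψnt : ∃ x : F, ϖ * x ∈ O ∧ ψ x ≠ 1)
    (m : ℕ) (hm : Odd m) (hm3 : 3 ≤ m)
    (χ : F →* ℂ)
    (hχ : ∀ x : F, (x - 1) * (ϖ ^ m)⁻¹ ∈ O → χ x = 1)
    (hχ' : ∃ x : F, (x - 1) * (ϖ ^ (m - 1))⁻¹ ∈ O ∧ χ x ≠ 1)
    (c : F) (hcO : c ∈ O) (hcu : c⁻¹ ∈ O)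
    (hc : ∀ x : F, (x - 1) * (ϖ ^ ((m + 1) / 2))⁻¹ ∈ O →
      ψ (c * (x - 1) * (ϖ ^ m)⁻¹) = (χ x)⁻¹) :
    ∃ b : F, b ∈ O ∧
      (∀ x : F, (x - 1) * (ϖ ^ ((m - 1) / 2))⁻¹ ∈ O →
        χ x = ψ ((2 : F)⁻¹ * c * ((x - 1) ^ 2 - 2 * (x - 1)) * (ϖ ^ m)⁻¹) *
          ψ (c * b * (x - 1) * (ϖ ^ ((m + 1) / 2))⁻¹)) ∧
      (∀ b' : F, b' ∈ O →
        (∀ x : F, (x - 1) * (ϖ ^ ((m - 1) / 2))⁻¹ ∈ O →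
          χ x = ψ ((2 : F)⁻¹ * c * ((x - 1) ^ 2 - 2 * (x - 1)) * (ϖ ^ m)⁻¹) *
            ψ (c * b' * (x - 1) * (ϖ ^ ((m + 1) / 2))⁻¹)) →
        (b - b') * ϖ⁻¹ ∈ O) :=
  stmt_16_general (p := p) O ϖ hϖO hϖ0 hϖnu hϖgen hfin h2 ψ hψO hψnt m hm hm3 χ hχ' c hcO hcu hc
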